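/- arXiv:1205.1271 — 4 statements merged into one kernel-verified Lean document; each statement's English description precedes it below -/
import Mathlib

section
/- Let G be a directed graph, T ⊆ V(G), and let z be any vertex. Then there are at most 4^k members W of I_k such that z lies in the exact reverse shadow of W (i.e., W is a minimal z–T separator). -/
variable {V : Type*}

/-- `Reach E W a b`: there is a path from `a` to `b` in `G ∖ W`. -/
def Reach (E : V → V → Prop) (W : Set V) (a b : V) : Prop :=
  a ∉ W ∧ b ∉ W ∧ Relation.ReflTransGen (fun x y => E x y ∧ x ∉ W ∧ y ∉ W) a b

/-- `W` is an `X–Y` separator: it is disjoint from `X ∪ Y ∪ Vinf` (where `Vinf`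
is the set of undeletable vertices) and `G ∖ W` has no path from `X` to `Y`. -/
def IsSep (E : V → V → Prop) (Vinf X Y W : Set V) : Prop :=
  Disjoint W (X ∪ Y ∪ Vinf) ∧ ∀ x ∈ X, ∀ y ∈ Y, ¬ Reach E W x y

/-- A minimal `X–Y` separator: no proper subset is an `X–Y` separator. -/
def IsMinSep (E : V → V → Prop) (Vinf X Y W : Set V) : Prop :=
  IsSep E Vinf X Y W ∧ ∀ W' ⊂ W, ¬ IsSep E Vinf X Y W'

/-- `R⁺_{G∖W}(X)`: the set of vertices reachable from `X` in `G ∖ W`. -/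
def ReachSet (E : V → V → Prop) (W X : Set V) : Set V :=
  {b | ∃ a ∈ X, Reach E W a b}

/-- An important `X–Y` separator: a minimal `X–Y` separator `W` such that no
`X–Y` separator `W'` satisfies `|W'| ≤ |W|` and
`R⁺_{G∖W}(X) ⊊ R⁺_{G∖W'}(X)`. -/
def IsImpSep (E : V → V → Prop) (Vinf X Y W : Set V) : Prop :=
  IsMinSep E Vinf X Y W ∧
    ¬ ∃ W', IsSep E Vinf X Y W' ∧ W'.ncard ≤ W.ncard ∧
      ReachSet E W X ⊂ ReachSet E W' X

/-!
An important `X–T` separator that is also a minimal `z–T` separator is important for `z`, by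
uncrossing with the submodular function `R ↦ |N⁺(R)|`; so every set counted is an important
`z–T` separator of size at most `k`.

These number at most `2 ^ (2k - λ)`, `λ` the minimum cut. Let `R` be the furthest minimum cut
side (the union of all of them, by submodularity) and `v ∈ N⁺(R)`; every important separator
contains `R` in its reach set. Those containing `v` are, minus `v`, important separators of size
`k - 1` in `G - v`, where the minimum cut drops by at most one; those avoiding `v` are important
for the source `R ∪ {v}`, whose minimum cut exceeds `λ`. Either way `2k - λ` decreases.
-/

variable {E : V → V → Prop} {Vinf X Y Z T W W' U R A B : Set V} {a b c v w : V}

theorem Reach.refl (h : a ∉ W) : Reach E W a a := ⟨h, h, .refl⟩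

theorem Reach.trans (h : Reach E W a b) (h' : Reach E W b c) : Reach E W a c :=
  ⟨h.1, h'.2.1, h.2.2.trans h'.2.2⟩

theorem Reach.anti (hW : W' ⊆ W) (h : Reach E W a b) : Reach E W' a b :=
  ⟨fun ha => h.1 (hW ha), fun hb => h.2.1 (hW hb),
    Relation.ReflTransGen.mono (fun _ _ hs => ⟨hs.1, fun hx => hs.2.1 (hW hx),
      fun hy => hs.2.2 (hW hy)⟩) _ _ h.2.2⟩

theorem mem_reachSet_of_mem (ha : a ∈ X) (haW : a ∉ W) : a ∈ ReachSet E W X :=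
  ⟨a, ha, Reach.refl haW⟩

theorem reachSet_disjoint : Disjoint (ReachSet E W X) W :=
  Set.disjoint_left.2 fun _ ⟨_, _, h⟩ => h.2.1

theorem mem_reachSet_of_reach (ha : a ∈ ReachSet E W X) (h : Reach E W a b) :
    b ∈ ReachSet E W X :=
  let ⟨x, hx, hxa⟩ := ha
  ⟨x, hx, hxa.trans h⟩

theorem mem_reachSet_of_adj (ha : a ∈ ReachSet E W X) (hab : E a b) (hb : b ∉ W) :
    b ∈ ReachSet E W X :=
  have haW := reachSet_disjoint.notMem_of_mem_left ha
  mem_reachSet_of_reach ha ⟨haW, hb, .single ⟨hab, haW, hb⟩⟩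

theorem reachSet_anti (hW : W' ⊆ W) : ReachSet E W X ⊆ ReachSet E W' X :=
  fun _ ⟨x, hx, h⟩ => ⟨x, hx, h.anti hW⟩

theorem reachSet_subset_of_disjoint (h : Disjoint (ReachSet E W X) W') :
    ReachSet E W X ⊆ ReachSet E W' X := by
  rintro b ⟨x, hx, hxW, -, hwalk⟩
  induction hwalk with
  | refl => exact mem_reachSet_of_mem hx (h.notMem_of_mem_left (mem_reachSet_of_mem hx hxW))
  | tail hwalk hstep ih =>
    exact mem_reachSet_of_adj ih hstep.1
      (h.notMem_of_mem_left ⟨x, hx, hxW, hstep.2.2, hwalk.tail hstep⟩)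

theorem reachSet_eq_of_subset (hXY : X ⊆ Y) (hY : Y ⊆ ReachSet E W X) :
    ReachSet E W Y = ReachSet E W X :=
  Set.Subset.antisymm (fun _ ⟨_, hy, h⟩ => mem_reachSet_of_reach (hY hy) h)
    fun _ ⟨x, hx, h⟩ => ⟨x, hXY hx, h⟩

def outNbhd (E : V → V → Prop) (R : Set V) : Set V :=
  {u | u ∉ R ∧ ∃ r ∈ R, E r u}

theorem mem_outNbhd_of_subset (hR : A ⊆ B) (hw : w ∈ outNbhd E A) (hwB : w ∉ B) :
    w ∈ outNbhd E B :=
  let ⟨_, r, hr, hrw⟩ := hw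
  ⟨hwB, r, hR hr, hrw⟩

theorem outNbhd_union_subset : outNbhd E (A ∪ B) ⊆ outNbhd E A ∪ outNbhd E B := by
  rintro u ⟨hu, r, hr | hr, hru⟩
  · exact .inl ⟨fun h => hu (.inl h), r, hr, hru⟩
  · exact .inr ⟨fun h => hu (.inr h), r, hr, hru⟩

theorem outNbhd_inter_subset : outNbhd E (A ∩ B) ⊆ outNbhd E A ∪ outNbhd E B := by
  rintro u ⟨hu, r, ⟨hrA, hrB⟩, hru⟩
  by_cases huA : u ∈ A
  · exact .inr ⟨fun huB => hu ⟨huA, huB⟩, r, hrB, hru⟩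
  · exact .inl ⟨huA, r, hrA, hru⟩

theorem outNbhd_union_inter_outNbhd_inter_subset :
    outNbhd E (A ∪ B) ∩ outNbhd E (A ∩ B) ⊆ outNbhd E A ∩ outNbhd E B := by
  rintro u ⟨⟨hu, _⟩, _, r, ⟨hrA, hrB⟩, hru⟩
  exact ⟨⟨fun h => hu (.inl h), r, hrA, hru⟩, ⟨fun h => hu (.inr h), r, hrB, hru⟩⟩

theorem ncard_outNbhd_union_add_ncard_outNbhd_inter_le [Finite V] (A B : Set V) :
    (outNbhd E (A ∪ B)).ncard + (outNbhd E (A ∩ B)).ncard ≤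
      (outNbhd E A).ncard + (outNbhd E B).ncard := by
  rw [← Set.ncard_union_add_ncard_inter, ← Set.ncard_union_add_ncard_inter (outNbhd E A)]
  exact add_le_add (Set.ncard_le_ncard (Set.union_subset outNbhd_union_subset outNbhd_inter_subset))
    (Set.ncard_le_ncard outNbhd_union_inter_outNbhd_inter_subset)

theorem outNbhd_reachSet_subset : outNbhd E (ReachSet E W X) ⊆ W := fun _ ⟨hu, _, hr, hru⟩ =>
  by_contra fun huW => hu (mem_reachSet_of_adj hr hru huW)

theorem reachSet_outNbhd_subset (hX : X ⊆ R) : ReachSet E (outNbhd E R) X ⊆ R := by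
  rintro b ⟨x, hx, -, -, hwalk⟩
  induction hwalk with
  | refl => exact hX hx
  | tail _ hstep ih => exact by_contra fun hc => hstep.2.2 ⟨hc, _, ih, hstep.1⟩

theorem isSep_outNbhd (hX : X ⊆ R) (hT : Disjoint R T)
    (hV : Disjoint (outNbhd E R) (T ∪ Vinf)) : IsSep E Vinf X T (outNbhd E R) := by
  refine ⟨?_, fun x hx t ht h =>
    hT.notMem_of_mem_left (reachSet_outNbhd_subset hX ⟨x, hx, h⟩) ht⟩
  rw [Set.union_assoc, Set.disjoint_union_right]
  exact ⟨Set.disjoint_left.2 fun _ hu hx => hu.1 (hX hx), hV⟩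

theorem IsSep.subset_reachSet (h : IsSep E Vinf X T W) : X ⊆ ReachSet E W X :=
  fun _ hx => mem_reachSet_of_mem hx (h.1.notMem_of_mem_right (.inl (.inl hx)))

theorem IsSep.disjoint_reachSet (h : IsSep E Vinf X T W) : Disjoint (ReachSet E W X) T :=
  Set.disjoint_left.2 fun _ ⟨x, hx, hxt⟩ ht => h.2 x hx _ ht hxt

theorem IsSep.disjoint_target_union (h : IsSep E Vinf X T W) : Disjoint W (T ∪ Vinf) :=
  h.1.mono_right (by rw [Set.union_assoc]; exact Set.subset_union_right)

theorem IsSep.mono_left (hXY : X ⊆ Y) (h : IsSep E Vinf Y T W) : IsSep E Vinf X T W :=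
  ⟨h.1.mono_right (by gcongr), fun x hx => h.2 x (hXY hx)⟩

theorem IsSep.of_subset_reachSet (h : IsSep E Vinf X T W) (hY : Y ⊆ ReachSet E W X) :
    IsSep E Vinf Y T W := by
  refine ⟨?_, fun y hy t ht hyt => h.disjoint_reachSet.notMem_of_mem_left
    (mem_reachSet_of_reach (hY hy) hyt) ht⟩
  rw [Set.union_assoc, Set.disjoint_union_right]
  exact ⟨(reachSet_disjoint.mono_left hY).symm,
    h.1.mono_right (Set.union_subset_union_left _ Set.subset_union_right)⟩

structure IsSourceSide (E : V → V → Prop) (Vinf X T R : Set V) : Prop where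
  isSep : IsSep E Vinf X T (outNbhd E R)
  reachSet_eq : ReachSet E (outNbhd E R) X = R

namespace IsSourceSide

theorem subset (hR : IsSourceSide E Vinf X T R) : X ⊆ R :=
  hR.reachSet_eq ▸ hR.isSep.subset_reachSet

theorem disjoint (hR : IsSourceSide E Vinf X T R) : Disjoint R T :=
  hR.reachSet_eq ▸ hR.isSep.disjoint_reachSet

theorem subset_reachSet_of_disjoint (hR : IsSourceSide E Vinf X T R) (h : Disjoint R W') :
    R ⊆ ReachSet E W' X :=
  calc R = ReachSet E (outNbhd E R) X := hR.reachSet_eq.symm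
    _ ⊆ ReachSet E W' X := reachSet_subset_of_disjoint (by rwa [hR.reachSet_eq])

theorem union (hA : IsSourceSide E Vinf X T A) (hB : IsSourceSide E Vinf X T B) :
    IsSourceSide E Vinf X T (A ∪ B) := by
  have hsep : IsSep E Vinf X T (outNbhd E (A ∪ B)) :=
    isSep_outNbhd (hA.subset.trans Set.subset_union_left) (hA.disjoint.union_left hB.disjoint)
      ((hA.isSep.disjoint_target_union.union_left hB.isSep.disjoint_target_union).mono_left
        outNbhd_union_subset)
  refine ⟨hsep, (reachSet_outNbhd_subset (hA.subset.trans Set.subset_union_left)).antisymm ?_⟩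
  have hdisj : Disjoint (A ∪ B) (outNbhd E (A ∪ B)) := Set.disjoint_left.2 fun _ h hu => hu.1 h
  exact Set.union_subset
    (hA.subset_reachSet_of_disjoint (hdisj.mono_left Set.subset_union_left))
    (hB.subset_reachSet_of_disjoint (hdisj.mono_left Set.subset_union_right))

theorem isSep_outNbhd_inter (hA : IsSourceSide E Vinf X T A) (hB : IsSourceSide E Vinf X T B) :
    IsSep E Vinf X T (outNbhd E (A ∩ B)) :=
  isSep_outNbhd (Set.subset_inter hA.subset hB.subset) (hA.disjoint.mono_left Set.inter_subset_left)
    ((hA.isSep.disjoint_target_union.union_left hB.isSep.disjoint_target_union).mono_left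
      outNbhd_inter_subset)

theorem of_subset_reachSet (hR : IsSourceSide E Vinf Y T R) (hXY : X ⊆ Y)
    (hY : Y ⊆ ReachSet E (outNbhd E R) X) : IsSourceSide E Vinf X T R :=
  ⟨hR.isSep.mono_left hXY, reachSet_eq_of_subset hXY hY ▸ hR.reachSet_eq⟩

end IsSourceSide

theorem IsSep.isSourceSide_reachSet (h : IsSep E Vinf X T W) :
    IsSourceSide E Vinf X T (ReachSet E W X) := by
  refine ⟨isSep_outNbhd h.subset_reachSet h.disjoint_reachSet ?_, ?_⟩
  · exact h.disjoint_target_union.mono_left outNbhd_reachSet_subset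
  · exact (reachSet_outNbhd_subset h.subset_reachSet).antisymm
      (reachSet_subset_of_disjoint (Set.disjoint_left.2 fun _ hu hu' => hu'.1 hu))

theorem IsMinSep.outNbhd_reachSet_eq (h : IsMinSep E Vinf X T W) :
    outNbhd E (ReachSet E W X) = W :=
  (Set.eq_or_ssubset_of_subset outNbhd_reachSet_subset).resolve_right
    fun hlt => h.2 _ hlt h.1.isSourceSide_reachSet.isSep

namespace IsImpSep

theorem reachSet_eq (hW : IsImpSep E Vinf X T W) (hU : IsSep E Vinf X T U)
    (hcard : U.ncard ≤ W.ncard) (hR : ReachSet E W X ⊆ ReachSet E U X) :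
    ReachSet E U X = ReachSet E W X :=
  ((Set.eq_or_ssubset_of_subset hR).resolve_right fun hlt => hW.2 ⟨U, hU, hcard, hlt⟩).symm

theorem subset_of_reachSet_subset (hW : IsImpSep E Vinf X T W) (hU : IsSep E Vinf X T U)
    (hcard : U.ncard ≤ W.ncard) (hR : ReachSet E W X ⊆ ReachSet E U X) : W ⊆ U := by
  rw [← hW.1.outNbhd_reachSet_eq, ← hW.reachSet_eq hU hcard hR]
  exact outNbhd_reachSet_subset

theorem of_subset_reachSet (hW : IsImpSep E Vinf X T W) (hXY : X ⊆ Y)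
    (hY : Y ⊆ ReachSet E W X) (hYU : ∀ U, IsSep E Vinf Y T U → Y ⊆ ReachSet E U X) :
    IsImpSep E Vinf Y T W := by
  refine ⟨⟨hW.1.1.of_subset_reachSet hY, fun U hUW hU => hW.1.2 U hUW (hU.mono_left hXY)⟩,
    ?_⟩
  rintro ⟨U, hU, hcard, hlt⟩
  rw [reachSet_eq_of_subset hXY hY, reachSet_eq_of_subset hXY (hYU U hU)] at hlt
  exact hW.2 ⟨U, hU.mono_left hXY, hcard, hlt⟩

/-- An improvement `W'` for `Z` yields, by submodularity, the `X–T` separator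
`outNbhd E (A ∪ B)` of size at most `|W|`; importance for `X` forces it to contain `W`, and then
`W` cannot block anything that `W'` lets `Z` reach. -/
theorem of_isMinSep [Finite V] (hW : IsImpSep E Vinf X T W) (hZ : IsMinSep E Vinf Z T W) :
    IsImpSep E Vinf Z T W := by
  refine ⟨hZ, ?_⟩
  rintro ⟨W', hW', hcard, hlt⟩
  set A := ReachSet E W X ∪ ReachSet E W Z
  set B := ReachSet E W' Z
  have hAW : outNbhd E A ⊆ W := outNbhd_union_subset.trans
    (Set.union_subset outNbhd_reachSet_subset outNbhd_reachSet_subset)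
  have hBW' : outNbhd E B ⊆ W' := outNbhd_reachSet_subset
  have hWAB : W ⊆ outNbhd E (A ∩ B) := fun w hw =>
    mem_outNbhd_of_subset (Set.subset_inter Set.subset_union_right hlt.subset)
      (hZ.outNbhd_reachSet_eq.superset hw)
      fun h => (reachSet_disjoint.union_left reachSet_disjoint).notMem_of_mem_left h.1 hw
  have hsep : IsSep E Vinf X T (outNbhd E (A ∪ B)) :=
    isSep_outNbhd (hW.1.1.subset_reachSet.trans (Set.subset_union_left.trans Set.subset_union_left))
      ((hW.1.1.disjoint_reachSet.union_left hZ.1.disjoint_reachSet).union_left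
        hW'.disjoint_reachSet)
      ((hW.1.1.disjoint_target_union.union_left hW'.disjoint_target_union).mono_left
        (outNbhd_union_subset.trans (Set.union_subset_union hAW hBW')))
  have hcardAB : (outNbhd E (A ∪ B)).ncard ≤ W.ncard := by
    have := ncard_outNbhd_union_add_ncard_outNbhd_inter_le (E := E) A B
    have := Set.ncard_le_ncard hAW
    have := Set.ncard_le_ncard hWAB
    have := Set.ncard_le_ncard hBW'
    omega
  have hWU : W ⊆ outNbhd E (A ∪ B) := hW.subset_of_reachSet_subset hsep hcardAB
    (reachSet_subset_of_disjoint (Set.disjoint_left.2 fun _ h hu => hu.1 (.inl (.inl h))))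
  exact hlt.not_subset (reachSet_subset_of_disjoint
    (Set.disjoint_left.2 fun _ h hu => (hWU hu).1 (.inr h)))

end IsImpSep

def IsMinCutSide (E : V → V → Prop) (Vinf X T R : Set V) : Prop :=
  IsSourceSide E Vinf X T R ∧ ∀ U, IsSep E Vinf X T U → (outNbhd E R).ncard ≤ U.ncard

namespace IsMinCutSide

variable [Finite V]

theorem union (hA : IsMinCutSide E Vinf X T A) (hB : IsMinCutSide E Vinf X T B) :
    IsMinCutSide E Vinf X T (A ∪ B) := by
  refine ⟨hA.1.union hB.1, fun U hU => ?_⟩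
  have := ncard_outNbhd_union_add_ncard_outNbhd_inter_le (E := E) A B
  have := hB.2 _ (hA.1.isSep_outNbhd_inter hB.1)
  have := hA.2 U hU
  omega

/-- Uncrossing with a minimum cut: `outNbhd E (ReachSet E W X ∪ R)` is no larger than `W`
and reaches more, so importance of `W` forces `R ⊆ ReachSet E W X`. -/
theorem subset_reachSet (hR : IsMinCutSide E Vinf X T R) (hW : IsImpSep E Vinf X T W) :
    R ⊆ ReachSet E W X := by
  have hRW := hW.1.1.isSourceSide_reachSet
  have hU := hRW.union hR.1
  have hcard : (outNbhd E (ReachSet E W X ∪ R)).ncard ≤ W.ncard := by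
    have := ncard_outNbhd_union_add_ncard_outNbhd_inter_le (E := E) (ReachSet E W X) R
    have := hR.2 _ (hRW.isSep_outNbhd_inter hR.1)
    have := Set.ncard_le_ncard (outNbhd_reachSet_subset (E := E) (W := W) (X := X))
    omega
  have heq := hW.reachSet_eq hU.isSep hcard (by rw [hU.reachSet_eq]; exact Set.subset_union_left)
  rw [hU.reachSet_eq] at heq
  exact heq ▸ Set.subset_union_right

end IsMinCutSide

theorem exists_isGreatest_isMinCutSide [Finite V] (hW : IsSep E Vinf X T W) :
    ∃ R, IsGreatest {R | IsMinCutSide E Vinf X T R} R := by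
  obtain ⟨W₀, hW₀, hmin⟩ :=
    Set.Finite.exists_minimalFor Set.ncard {U | IsSep E Vinf X T U} (Set.toFinite _) ⟨W, hW⟩
  have hR₀ : IsMinCutSide E Vinf X T (ReachSet E W₀ X) :=
    ⟨hW₀.isSourceSide_reachSet, fun U hU => (Set.ncard_le_ncard outNbhd_reachSet_subset).trans
      ((le_total _ _).elim (hmin hU) id)⟩
  obtain ⟨R, hR, hmax⟩ :=
    (Set.toFinite {R | IsMinCutSide E Vinf X T R}).exists_maximal ⟨_, hR₀⟩
  exact ⟨R, hR, fun R' hR' => Set.union_subset_iff.1 (hmax (hR.union hR') Set.subset_union_left)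
    |>.2⟩

theorem insert_subset_reachSet (hR : IsSourceSide E Vinf X T R) (hv : v ∈ outNbhd E R)
    (hU : IsSep E Vinf (insert v R) T U) : insert v R ⊆ ReachSet E U X := by
  have hRU : R ⊆ ReachSet E U X := hR.subset_reachSet_of_disjoint
    (reachSet_disjoint.mono_left ((Set.subset_insert v R).trans hU.subset_reachSet))
  obtain ⟨-, r, hr, hrv⟩ := hv
  exact Set.insert_subset (mem_reachSet_of_adj (hRU hr) hrv
    (reachSet_disjoint.notMem_of_mem_left (hU.subset_reachSet (Set.mem_insert v R)))) hRU

/-- Otherwise the side reached from `insert v R` would be a minimum cut side containing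
`v ∉ R`. -/
theorem ncard_outNbhd_lt_of_isGreatest [Finite V]
    (hR : IsGreatest {R | IsMinCutSide E Vinf X T R} R)
    (hv : v ∈ outNbhd E R) (hU : IsSep E Vinf (insert v R) T U) :
    (outNbhd E R).ncard < U.ncard := by
  by_contra! hle
  have hR' := hU.isSourceSide_reachSet
  have hvU : v ∉ U := hU.1.notMem_of_mem_right (.inl (.inl (Set.mem_insert v R)))
  have hmin : IsMinCutSide E Vinf X T (ReachSet E U (insert v R)) :=
    ⟨hR'.of_subset_reachSet (hR.1.1.subset.trans (Set.subset_insert v R))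
      (insert_subset_reachSet hR.1.1 hv hR'.isSep),
    fun U' hU' => (Set.ncard_le_ncard outNbhd_reachSet_subset).trans (hle.trans (hR.1.2 U' hU'))⟩
  exact hv.1 (hR.2 hmin (mem_reachSet_of_mem (Set.mem_insert v R) hvU))

def deleteVertex (E : V → V → Prop) (v : V) : V → V → Prop :=
  fun x y => E x y ∧ x ≠ v ∧ y ≠ v

theorem reach_deleteVertex_iff (ha : a ≠ v) :
    Reach (deleteVertex E v) U a b ↔ Reach E (insert v U) a b := by
  have hstep : (fun x y => deleteVertex E v x y ∧ x ∉ U ∧ y ∉ U) =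
      fun x y => E x y ∧ x ∉ insert v U ∧ y ∉ insert v U := by
    ext x y
    simp only [deleteVertex, Set.mem_insert_iff, not_or]
    tauto
  have hbv
      (h : Relation.ReflTransGen (fun x y => E x y ∧ x ∉ insert v U ∧ y ∉ insert v U) a b) :
      b ≠ v := by
    rcases h.cases_tail with rfl | ⟨_, _, hlast⟩
    exacts [ha, fun hb => hlast.2.2 (.inl hb)]
  unfold Reach
  rw [hstep]
  exact ⟨fun ⟨ha', hb', h⟩ => ⟨(·.elim ha ha'), (·.elim (hbv h) hb'), h⟩,
    fun ⟨ha', hb', h⟩ => ⟨fun h' => ha' (.inr h'), fun h' => hb' (.inr h'), h⟩⟩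

theorem reachSet_deleteVertex (hv : v ∉ X) :
    ReachSet (deleteVertex E v) U X = ReachSet E (insert v U) X := by
  ext b
  exact exists_congr fun x => and_congr_right fun hx =>
    reach_deleteVertex_iff (ne_of_mem_of_not_mem hx hv)

theorem isSep_deleteVertex_iff (hv : v ∉ X ∪ T ∪ Vinf) :
    IsSep (deleteVertex E v) Vinf X T U ↔ IsSep E Vinf X T (insert v U) := by
  have hvX : v ∉ X := fun h => hv (.inl (.inl h))
  simp only [IsSep, Set.disjoint_insert_left, hv, not_false_eq_true, true_and]
  exact and_congr_right' <| forall₂_congr fun x hx => by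
    simp only [reach_deleteVertex_iff (ne_of_mem_of_not_mem hx hvX)]

theorem IsImpSep.sdiff_singleton [Finite V] (hv : v ∉ X ∪ T ∪ Vinf) (hvW : v ∈ W)
    (hW : IsImpSep E Vinf X T W) : IsImpSep (deleteVertex E v) Vinf X T (W \ {v}) := by
  have hvX : v ∉ X := fun h => hv (.inl (.inl h))
  have hinsW : insert v (W \ {v}) = W := Set.insert_sdiff_singleton.trans (Set.insert_eq_of_mem hvW)
  refine ⟨⟨(isSep_deleteVertex_iff hv).2 (by rw [hinsW]; exact hW.1.1), fun U hUW hU => ?_⟩,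
    ?_⟩
  · obtain ⟨u, ⟨huW, huv⟩, huU⟩ := Set.exists_of_ssubset hUW
    have hsub : insert v U ⊆ W := Set.insert_subset hvW (hUW.subset.trans Set.sdiff_subset)
    refine hW.1.2 _ ((Set.ssubset_iff_of_subset hsub).2 ⟨u, huW, ?_⟩)
      ((isSep_deleteVertex_iff hv).1 hU)
    rintro (rfl | h)
    exacts [huv rfl, huU h]
  · rintro ⟨U, hU, hcard, hlt⟩
    rw [reachSet_deleteVertex hvX, reachSet_deleteVertex hvX, hinsW] at hlt
    refine hW.2 ⟨_, (isSep_deleteVertex_iff hv).1 hU, ?_, hlt⟩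
    have := Set.ncard_insert_le v U
    have := Set.ncard_sdiff_singleton_of_mem hvW
    have := (Set.ncard_pos (s := W)).2 ⟨v, hvW⟩
    omega

def impSeps (E : V → V → Prop) (Vinf X T : Set V) (k : ℕ) : Set (Set V) :=
  {W | IsImpSep E Vinf X T W ∧ W.ncard ≤ k}

theorem ncard_impSeps_le_one [Finite V] (h : IsSep E Vinf X T ∅) (k : ℕ) :
    (impSeps E Vinf X T k).ncard ≤ 1 := by
  refine (Set.ncard_le_ncard (t := {∅}) fun W hW => ?_).trans (Set.ncard_singleton _).le
  exact Set.subset_empty_iff.1 (hW.1.subset_of_reachSet_subset h (by simp)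
    (reachSet_anti (Set.empty_subset W)))

theorem impSeps_subset_union [Finite V] (hR : IsGreatest {R | IsMinCutSide E Vinf X T R} R)
    (hv : v ∈ outNbhd E R) (k : ℕ) :
    impSeps E Vinf X T k ⊆ insert v '' impSeps (deleteVertex E v) Vinf X T (k - 1) ∪
      impSeps E Vinf (insert v R) T k := by
  have hvXTV : v ∉ X ∪ T ∪ Vinf := hR.1.1.isSep.1.notMem_of_mem_left hv
  rintro W ⟨hW, hWk⟩
  by_cases hvW : v ∈ W
  · refine .inl ⟨W \ {v}, ⟨hW.sdiff_singleton hvXTV hvW, ?_⟩,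
      Set.insert_sdiff_singleton.trans (Set.insert_eq_of_mem hvW)⟩
    rw [Set.ncard_sdiff_singleton_of_mem hvW]
    omega
  · have hRW := hR.1.subset_reachSet hW
    obtain ⟨-, r, hr, hrv⟩ := id hv
    refine .inr ⟨hW.of_subset_reachSet (hR.1.1.subset.trans (Set.subset_insert v R))
      (Set.insert_subset (mem_reachSet_of_adj (hRW hr) hrv hvW) hRW)
      fun U hU => insert_subset_reachSet hR.1.1 hv hU, hWk⟩

/-- `hμ` encodes `2k - λ ≤ μ`, `λ` the minimum `X–T` cut, without truncated subtraction. -/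
theorem ncard_impSeps_le [Finite V] (μ : ℕ) (E : V → V → Prop) (X : Set V) (k : ℕ)
    (hμ : ∀ U, IsSep E Vinf X T U → 2 * k ≤ μ + U.ncard) :
    (impSeps E Vinf X T k).ncard ≤ 2 ^ μ := by
  induction μ using Nat.strong_induction_on generalizing E X k with
  | _ μ ih =>
  obtain hempty | ⟨W, hW, hWk⟩ := (impSeps E Vinf X T k).eq_empty_or_nonempty
  · simp [hempty]
  obtain ⟨R, hR⟩ := exists_isGreatest_isMinCutSide hW.1.1
  obtain hRempty | ⟨v, hv⟩ := (outNbhd E R).eq_empty_or_nonempty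
  · exact (ncard_impSeps_le_one (hRempty ▸ hR.1.1.isSep) k).trans Nat.one_le_two_pow
  have hvXTV : v ∉ X ∪ T ∪ Vinf := hR.1.1.isSep.1.notMem_of_mem_left hv
  have hcut := hμ _ hR.1.1.isSep
  have hcutk := (hR.1.2 W hW.1.1).trans hWk
  have hcutpos := (Set.ncard_pos (s := outNbhd E R)).2 ⟨v, hv⟩
  obtain ⟨μ, rfl⟩ : ∃ m, μ = m + 1 := ⟨μ - 1, by omega⟩
  have hdel := ih μ (by omega) (deleteVertex E v) X (k - 1) fun U hU => by
    have := hμ _ ((isSep_deleteVertex_iff hvXTV).1 hU)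
    have := Set.ncard_insert_le v U
    omega
  have hins := ih μ (by omega) E (insert v R) k fun U hU => by
    have := ncard_outNbhd_lt_of_isGreatest hR hv hU
    omega
  calc (impSeps E Vinf X T k).ncard
      ≤ (insert v '' impSeps (deleteVertex E v) Vinf X T (k - 1)).ncard +
          (impSeps E Vinf (insert v R) T k).ncard :=
        (Set.ncard_le_ncard (impSeps_subset_union hR hv k)).trans (Set.ncard_union_le _ _)
    _ ≤ 2 ^ μ + 2 ^ μ := add_le_add ((Set.ncard_image_le (Set.toFinite _)).trans hdel) hins
    _ = 2 ^ (μ + 1) := by ring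

/-- For any vertex `z` there are at most `4^k` members `W` of `I_k` (the
collection of important `v–T` separators of size at most `k` for some `v ∉ T`)
such that `z` lies in the exact reverse shadow of `W`, i.e., `W` is a minimal
`z–T` separator. -/
theorem stmt8 [Fintype V] (E : V → V → Prop) (Vinf T : Set V) (k : ℕ) (z : V) :
    {W : Set V | (∃ v ∉ T, IsImpSep E Vinf {v} T W ∧ W.ncard ≤ k) ∧
        IsMinSep E Vinf {z} T W}.ncard ≤ 4 ^ k := by
  calc _ ≤ (impSeps E Vinf {z} T k).ncard := by
        refine Set.ncard_le_ncard ?_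
        rintro W ⟨⟨v, -, hW, hWk⟩, hz⟩
        exact ⟨hW.of_isMinSep hz, hWk⟩
    _ ≤ 2 ^ (2 * k) := ncard_impSeps_le (2 * k) E {z} k fun U _ => Nat.le_add_right _ _
    _ = 4 ^ k := by rw [pow_mul]; norm_num
end

section
/- If W is a minimum F-transversal for a T-connected family F of subgraphs of G, then W is thin: no vertex v ∈ W lies in the reverse shadow of W ∖ {v} with respect to T. -/
variable {V : Type*}

/-- The reverse shadow `r(W)` of `W` with respect to `T`: vertices `v ∉ W ∪ T`
such that `W` is a `v–T` separator (every `v`-to-`T` path meets `W`). -/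
def rshadow (E : V → V → Prop) (T W : Set V) : Set V :=
  {v | v ∉ W ∧ v ∉ T ∧ ∀ t ∈ T, ¬ Reach E W v t}

/-- The forward shadow `f(W)` of `W` with respect to `T`: vertices `v ∉ W ∪ T`
such that `W` is a `T–v` separator (every `T`-to-`v` path meets `W`). -/
def fshadow (E : V → V → Prop) (T W : Set V) : Set V :=
  {v | v ∉ W ∧ v ∉ T ∧ ∀ t ∈ T, ¬ Reach E W t v}

/-- A subgraph of the directed graph with edge relation `E`. -/
structure DiSubgraph (E : V → V → Prop) where
  verts : Set V
  edges : V → V → Prop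
  edges_sub : ∀ a b, edges a b → E a b
  edge_vert_left : ∀ a b, edges a b → a ∈ verts
  edge_vert_right : ∀ a b, edges a b → b ∈ verts

/-- A family `F` of subgraphs is `T`-connected if every vertex of each member
can reach some vertex of `T` and is reachable from some vertex of `T` by walks
completely contained in that member. -/
def TConnected {E : V → V → Prop} (T : Set V) (F : Set (DiSubgraph E)) : Prop :=
  ∀ Fi ∈ F, ∀ v ∈ Fi.verts,
    (∃ t ∈ T, Relation.ReflTransGen Fi.edges v t) ∧
    (∃ t ∈ T, Relation.ReflTransGen Fi.edges t v)

/-- An `F`-transversal: a vertex set intersecting every member of `F`. -/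
def IsTransversal {E : V → V → Prop} (F : Set (DiSubgraph E)) (W : Set V) : Prop :=
  ∀ Fi ∈ F, (W ∩ Fi.verts).Nonempty


namespace DiSubgraph

variable {E : V → V → Prop} (H : DiSubgraph E)

theorem mem_verts_of_reflTransGen {a b : V} (ha : a ∈ H.verts)
    (hab : Relation.ReflTransGen H.edges a b) : b ∈ H.verts := by
  rcases hab.cases_tail with rfl | ⟨c, -, hcb⟩
  · exact ha
  · exact H.edge_vert_right c b hcb

theorem reach_of_disjoint {S : Set V} (hS : Disjoint S H.verts) {a b : V} (ha : a ∈ H.verts)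
    (hab : Relation.ReflTransGen H.edges a b) : Reach E S a b := by
  have hnot : ∀ x ∈ H.verts, x ∉ S := fun x hx hxS => hS.ne_of_mem hxS hx rfl
  refine ⟨hnot a ha, hnot b (H.mem_verts_of_reflTransGen ha hab), ?_⟩
  refine Relation.ReflTransGen.mono (fun x y hxy => ?_) a b hab
  exact ⟨H.edges_sub x y hxy, hnot x (H.edge_vert_left x y hxy),
    hnot y (H.edge_vert_right x y hxy)⟩

end DiSubgraph

/-- A member of `F` meeting `W` only in `v` would carry a walk from `v` to `T` avoiding
`W \ {v}`; so when `v` is in the reverse shadow of `W \ {v}`, no such member exists. -/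
theorem IsTransversal.diff_singleton_of_mem_rshadow {E : V → V → Prop} {T : Set V}
    {F : Set (DiSubgraph E)} (hF : TConnected T F) {W : Set V} (hW : IsTransversal F W)
    {v : V} (hv : v ∈ rshadow E T (W \ {v})) : IsTransversal F (W \ {v}) := by
  intro H hH
  rw [← Set.not_disjoint_iff_nonempty_inter]
  intro hdisj
  have hvH : v ∈ H.verts := by
    obtain ⟨u, huW, huH⟩ := hW H hH
    obtain rfl : u = v := by
      by_contra hne
      exact hdisj.ne_of_mem ⟨huW, hne⟩ huH rfl
    exact huH
  obtain ⟨⟨t, htT, hvt⟩, -⟩ := hF H hH v hvH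
  exact hv.2.2 t htT (H.reach_of_disjoint hdisj hvH hvt)

/-- If `W` is a minimum `F`-transversal for a `T`-connected family `F`, then `W`
is thin: no vertex `v ∈ W` lies in the reverse shadow of `W ∖ {v}`. -/
theorem stmt10 [Fintype V] (E : V → V → Prop) (T : Set V)
    (F : Set (DiSubgraph E)) (hF : TConnected T F)
    (W : Set V) (hW : IsTransversal F W)
    (hmin : ∀ W' : Set V, IsTransversal F W' → W.ncard ≤ W'.ncard) :
    ∀ v ∈ W, v ∉ rshadow E T (W \ {v}) := by
  intro v hvW hv
  have hsmaller : (W \ {v}).ncard < W.ncard := Set.ncard_sdiff_singleton_lt_of_mem hvW W.toFinite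
  exact hsmaller.not_ge (hmin _ (hW.diff_singleton_of_mem_rshadow hF hv))
end

section
/- Torso preserves separation: Let G be a directed graph, C ⊆ V(G), and let G' be the torso of G on C (vertex set C, with an edge (a,b) whenever G has an a→b walk with no internal vertex in C). Then for any W ⊆ C and a, b ∈ C ∖ W, the graph G ∖ W has an a→b path if and only if G' ∖ W has an a→b path. -/
/-!
A torso edge `u → v` is an `E`-edge `u → y` followed by a walk from `y` to `v` whose vertices
other than `v` lie outside `C ⊇ W`; so a torso path avoiding `W` expands to a `G`-path avoiding
`W`. Conversely, cutting a `G ∖ W` path between `a, b ∈ C` at its successive visits to `C` splits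
it into torso edges.
-/

variable {V : Type*}

def WalkFromTo (E : V → V → Prop) (a b : V) (l : List V) : Prop :=
  l.Chain' E ∧ l.head? = some a ∧ l.getLast? = some b

/-- The edge relation of the torso of `G` on `C`. -/
def torsoE (E : V → V → Prop) (C : Set V) : V → V → Prop := fun a b =>
  a ∈ C ∧ b ∈ C ∧ ∃ l : List V, WalkFromTo E a b l ∧ 2 ≤ l.length ∧
    ∀ x ∈ l.tail.dropLast, x ∉ C

/-- The marked edge set `S'` of the torso: edges of `S` with both endpoints in
`C`, together with every torso edge `(a,b)` arising from an `a → b` walk with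
internal vertices outside `C` that contains an edge of `S`. -/
def torsoS (E : V → V → Prop) (C : Set V) (S : Set (V × V)) : Set (V × V) :=
  {p | p ∈ S ∧ p.1 ∈ C ∧ p.2 ∈ C} ∪
    {p | p.1 ∈ C ∧ p.2 ∈ C ∧ ∃ l : List V, WalkFromTo E p.1 p.2 l ∧
      2 ≤ l.length ∧ (∀ x ∈ l.tail.dropLast, x ∉ C) ∧
      ∃ q ∈ l.zip l.tail, q ∈ S}

def HasSCWThrough (E : V → V → Prop) (S : Set (V × V)) (W : Set V) (v : V) : Prop :=
  ∃ l : List V, l.Chain' E ∧ 2 ≤ l.length ∧ l.head? = l.getLast? ∧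
    (∀ x ∈ l, x ∉ W) ∧ v ∈ l ∧ ∃ q ∈ l.zip l.tail, q ∈ S

/-- `G ∖ W` has a closed walk using an edge of `S` (an `S`-closed-walk). -/
def HasSCW (E : V → V → Prop) (S : Set (V × V)) (W : Set V) : Prop :=
  ∃ v, HasSCWThrough E S W v

section Torso

variable {E : V → V → Prop} {C : Set V}

/-- `ReflTransGen (outsideStep E C) y c` encodes an `E`-walk from `y` to `c` all of whose
vertices except `c` lie outside `C`. -/
def outsideStep (E : V → V → Prop) (C : Set V) (u v : V) : Prop :=
  E u v ∧ u ∉ C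

lemma exists_walk_of_reflTransGen_outsideStep {x c : V}
    (h : Relation.ReflTransGen (outsideStep E C) x c) :
    ∃ l, WalkFromTo E x c l ∧ ∀ v ∈ l.dropLast, v ∉ C := by
  induction h using Relation.ReflTransGen.head_induction_on with
  | refl => exact ⟨[c], ⟨List.isChain_singleton c, rfl, rfl⟩, by simp⟩
  | @head x y hxy _ ih =>
    obtain ⟨l, ⟨hchain, hhead, hlast⟩, hout⟩ := ih
    obtain ⟨t, rfl⟩ : ∃ t, l = y :: t := ⟨l.tail, (List.cons_head?_tail hhead).symm⟩
    refine ⟨x :: y :: t, ⟨List.IsChain.cons_cons hxy.1 hchain, rfl, ?_⟩, ?_⟩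
    · rwa [List.getLast?_cons_cons]
    · simpa [List.dropLast_cons_cons, hxy.2] using hout

lemma reflTransGen_outsideStep_of_walk :
    ∀ {l : List V} {x c : V}, WalkFromTo E x c l → (∀ v ∈ l.dropLast, v ∉ C) →
      Relation.ReflTransGen (outsideStep E C) x c
  | [], _, _, ⟨_, hhead, _⟩, _ => by simp at hhead
  | [y], _, _, ⟨_, hhead, hlast⟩, _ => by
    simp only [List.head?_cons, List.getLast?_singleton, Option.some.injEq] at hhead hlast
    exact hhead ▸ hlast ▸ .refl
  | y :: z :: t, x, c, ⟨hchain, hhead, hlast⟩, hout => by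
    simp only [List.head?_cons, Option.some.injEq] at hhead
    subst hhead
    replace hchain := List.isChain_cons_cons.1 hchain
    rw [List.dropLast_cons_cons] at hout
    refine .head ⟨hchain.1, hout y (by simp)⟩ (reflTransGen_outsideStep_of_walk
      ⟨hchain.2, rfl, by rwa [List.getLast?_cons_cons] at hlast⟩ fun v hv => hout v (by simp [hv]))

lemma torsoE_iff {a b : V} :
    torsoE E C a b ↔
      a ∈ C ∧ b ∈ C ∧ ∃ y, E a y ∧ Relation.ReflTransGen (outsideStep E C) y b := by
  refine and_congr_right fun _ => and_congr_right fun _ => ⟨?_, ?_⟩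
  · rintro ⟨_ | ⟨a', _ | ⟨y, t⟩⟩, ⟨hchain, hhead, hlast⟩, hlen, hout⟩
    · simp at hlen
    · simp at hlen
    · simp only [List.head?_cons, Option.some.injEq] at hhead
      subst hhead
      obtain ⟨hay, hchain⟩ := List.isChain_cons_cons.1 hchain
      rw [List.getLast?_cons_cons] at hlast
      exact ⟨y, hay, reflTransGen_outsideStep_of_walk ⟨hchain, rfl, hlast⟩ hout⟩
  · rintro ⟨y, hay, hyb⟩
    obtain ⟨l, ⟨hchain, hhead, hlast⟩, hout⟩ := exists_walk_of_reflTransGen_outsideStep hyb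
    obtain ⟨t, rfl⟩ : ∃ t, l = y :: t := ⟨l.tail, (List.cons_head?_tail hhead).symm⟩
    refine ⟨a :: y :: t, ⟨List.IsChain.cons_cons hay hchain, rfl, ?_⟩, by simp, hout⟩
    rwa [List.getLast?_cons_cons]

lemma eq_of_reflTransGen_outsideStep {x c : V} (hx : x ∈ C)
    (h : Relation.ReflTransGen (outsideStep E C) x c) : x = c :=
  h.cases_head.resolve_right fun ⟨_, hstep, _⟩ => hstep.2 hx

variable {W : Set V}

lemma reflTransGen_avoiding_of_outsideStep (hW : W ⊆ C) {y v : V}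
    (h : Relation.ReflTransGen (outsideStep E C) y v) (hv : v ∉ W) :
    y ∉ W ∧ Relation.ReflTransGen (fun x y => E x y ∧ x ∉ W ∧ y ∉ W) y v := by
  induction h with
  | refl => exact ⟨hv, .refl⟩
  | @tail u v _ huv ih =>
    have hu : u ∉ W := fun huW => huv.2 (hW huW)
    exact ⟨(ih hu).1, (ih hu).2.tail ⟨huv.1, hu, hv⟩⟩

lemma reflTransGen_avoiding_of_torsoE (hW : W ⊆ C) {u v : V} (huv : torsoE E C u v)
    (hu : u ∉ W) (hv : v ∉ W) :
    Relation.ReflTransGen (fun x y => E x y ∧ x ∉ W ∧ y ∉ W) u v := by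
  obtain ⟨-, -, y, huy, hyv⟩ := torsoE_iff.1 huv
  obtain ⟨hy, hyv⟩ := reflTransGen_avoiding_of_outsideStep hW hyv hv
  exact .head ⟨huy, hu, hy⟩ hyv

lemma exists_torso_reach_of_reach {b : V} (hb : b ∈ C) (hb' : b ∉ W) {x : V}
    (h : Relation.ReflTransGen (fun x y => E x y ∧ x ∉ W ∧ y ∉ W) x b) :
    ∃ c ∈ C, c ∉ W ∧ Relation.ReflTransGen (outsideStep E C) x c ∧
      Relation.ReflTransGen (fun x y => torsoE E C x y ∧ x ∉ W ∧ y ∉ W) c b := by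
  induction h using Relation.ReflTransGen.head_induction_on with
  | refl => exact ⟨b, hb, hb', .refl, .refl⟩
  | @head x y hxy _ ih =>
    obtain ⟨c, hc, hc', hyc, hcb⟩ := ih
    by_cases hx : x ∈ C
    · have hxc : torsoE E C x c := torsoE_iff.2 ⟨hx, hc, y, hxy.1, hyc⟩
      exact ⟨x, hx, hxy.2.1, .refl, .head ⟨hxc, hxy.2.1, hc'⟩ hcb⟩
    · exact ⟨c, hc, hc', .head ⟨hxy.1, hx⟩ hyc, hcb⟩

end Torso

theorem stmt13_general (E : V → V → Prop) (C W : Set V) (hW : W ⊆ C)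
    (a b : V) (ha : a ∈ C) (ha' : a ∉ W) (hb : b ∈ C) (hb' : b ∉ W) :
    Reach E W a b ↔ Reach (torsoE E C) W a b := by
  refine ⟨fun ⟨_, _, hab⟩ => ⟨ha', hb', ?_⟩, fun ⟨_, _, hab⟩ => ⟨ha', hb', ?_⟩⟩
  · obtain ⟨c, -, -, hac, hcb⟩ := exists_torso_reach_of_reach hb hb' hab
    rwa [eq_of_reflTransGen_outsideStep ha hac]
  · exact hab.lift' id fun u v huv => reflTransGen_avoiding_of_torsoE hW huv.1 huv.2.1 huv.2.2

/-- Torso preserves separation: for `W ⊆ C` and `a, b ∈ C ∖ W`, the graph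
`G ∖ W` has an `a → b` path iff the torso of `G` on `C` minus `W` has one. -/
theorem stmt13 [Fintype V] (E : V → V → Prop) (C W : Set V) (hW : W ⊆ C)
    (a b : V) (ha : a ∈ C) (ha' : a ∉ W) (hb : b ∈ C) (hb' : b ∉ W) :
    Reach E W a b ↔ Reach (torsoE E C) W a b :=
  stmt13_general E C W hW a b ha ha' hb hb'
end

section
/- Let I = (G, S, T, k) be an instance of Disjoint Subset-DFVS Compression and Z ⊆ V(G) ∖ T. If the reduced instance I/Z (obtained by taking the torso on V(G) ∖ Z) has a solution, then I has a solution; i.e., if I is a no-instance then I/Z is a no-instance. -/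
variable {V : Type*}

/-! A solution `T₂` of `I/Z` is already a solution of `I`. Take an `S`-closed walk in `G ∖ T₂`.
If it stays inside `Z`, it also avoids `T` because `Z ∩ T = ∅`, which is impossible. Otherwise
rotate it to start at a vertex `c ∉ Z` and delete its vertices in `Z`: every maximal stretch
through `Z` becomes a torso edge, marked in `S'` whenever the stretch uses an edge of `S`, so the
result is an `S'`-closed walk of the torso avoiding `T₂`. -/

theorem Cycle.exists_eq_cons_of_mem {α : Type*} {c : α} {s : Cycle α} (hc : c ∈ s) :
    ∃ m : List α, s = ↑(c :: m) := by
  induction s using Quotient.inductionOn with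
  | h l =>
    obtain ⟨l₁, l₂, rfl⟩ := List.append_of_mem (Cycle.mem_coe_iff.mp hc)
    refine ⟨l₂ ++ l₁, Cycle.coe_eq_coe.mpr ?_⟩
    simpa using List.isRotated_append (l := l₁) (l' := c :: l₂)

namespace List

variable {α : Type*}

theorem isChain_iff_forall_mem_zip_tail {R : α → α → Prop} :
    ∀ {l : List α}, l.IsChain R ↔ ∀ q ∈ l.zip l.tail, R q.1 q.2
  | [] | [_] => by simp
  | a :: b :: l => by simp [isChain_iff_forall_mem_zip_tail (l := b :: l)]

theorem exists_mem_zip_tail_mem_iff_not_isChain {S : Set (α × α)} {l : List α} :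
    (∃ q ∈ l.zip l.tail, q ∈ S) ↔ ¬ l.IsChain (fun a b => (a, b) ∉ S) := by
  simp [isChain_iff_forall_mem_zip_tail]

theorem exists_cons_append_singleton_of_head?_eq_getLast? {l : List α}
    (hlen : 2 ≤ l.length) (hclosed : l.head? = l.getLast?) :
    ∃ a m, l = a :: (m ++ [a]) := by
  obtain _ | ⟨a, t⟩ := l
  · simp at hlen
  obtain rfl | ⟨m, b, rfl⟩ := t.eq_nil_or_concat'
  · simp at hlen
  · obtain rfl : a = b := by
      rw [← cons_append, getLast?_concat] at hclosed
      simpa using hclosed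
    exact ⟨a, m, rfl⟩

theorem exists_rotation_of_head?_eq_getLast? {l : List α}
    (hlen : 2 ≤ l.length) (hclosed : l.head? = l.getLast?) {c : α} (hc : c ∈ l) :
    ∃ m, (∀ R : α → α → Prop, l.IsChain R ↔ (c :: (m ++ [c])).IsChain R) ∧
      ∀ x ∈ c :: (m ++ [c]), x ∈ l := by
  -- `a :: (n ++ [a])` goes once around the cycle `a :: n`, and `Cycle.Chain` is rotation invariant.
  obtain ⟨a, n, rfl⟩ := exists_cons_append_singleton_of_head?_eq_getLast? hlen hclosed
  obtain ⟨m, hm⟩ := Cycle.exists_eq_cons_of_mem (s := ((a :: n : List α) : Cycle α))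
    (Cycle.mem_coe_iff.mpr (by simp at hc ⊢; tauto))
  refine ⟨m, fun R => ?_, fun x hx => ?_⟩
  · rw [← Cycle.chain_coe_cons, ← Cycle.chain_coe_cons, hm]
  · have : x ∈ ((a :: n : List α) : Cycle α) := by
      rw [hm, Cycle.mem_coe_iff]; simp at hx ⊢; tauto
    simp [Cycle.mem_coe_iff] at this ⊢; tauto

end List

section Torso

variable {E : V → V → Prop} {C : Set V} {S : Set (V × V)}

theorem torsoE_of_isChain {c d : V} {l : List V} (hc : c ∈ C) (hd : d ∈ C)
    (hl : ∀ x ∈ l, x ∉ C) (h : (c :: (l ++ [d])).IsChain E) : torsoE E C c d :=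
  ⟨hc, hd, c :: (l ++ [d]), ⟨h, rfl, by simp [List.getLast?_cons]⟩, by simp, by simpa using hl⟩

theorem mem_torsoS_of_isChain {c d : V} {l : List V} (hc : c ∈ C) (hd : d ∈ C)
    (hl : ∀ x ∈ l, x ∉ C) (h : (c :: (l ++ [d])).IsChain E)
    (hS : ∃ q ∈ (c :: (l ++ [d])).zip (c :: (l ++ [d])).tail, q ∈ S) :
    (c, d) ∈ torsoS E C S :=
  Or.inr ⟨hc, hd, c :: (l ++ [d]), ⟨h, rfl, by simp [List.getLast?_cons]⟩, by simp,
    by simpa using hl, hS⟩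

theorem isChain_filter_torso [DecidablePred (· ∈ C)] {c d : V} {l : List V} (hc : c ∈ C)
    (hd : d ∈ C) (h : (c :: (l ++ [d])).IsChain E) :
    (c :: (l.filter (· ∈ C) ++ [d])).IsChain (torsoE E C) ∧
      ((c :: (l.filter (· ∈ C) ++ [d])).IsChain (fun a b => (a, b) ∉ torsoS E C S) →
        (c :: (l ++ [d])).IsChain (fun a b => (a, b) ∉ S)) := by
  by_cases hl : ∀ x ∈ l, x ∉ C
  · have hf : l.filter (· ∈ C) = [] := List.filter_eq_nil_iff.mpr (by simpa using hl)
    simp only [hf, List.nil_append, List.isChain_pair]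
    refine ⟨torsoE_of_isChain hc hd hl h, fun hcd => ?_⟩
    by_contra hS
    exact hcd (mem_torsoS_of_isChain hc hd hl h
      (List.exists_mem_zip_tail_mem_iff_not_isChain.mpr hS))
  · push Not at hl
    obtain ⟨e, he, heC⟩ := hl
    obtain ⟨l₁, l₂, rfl⟩ := List.append_of_mem he
    have h' := List.isChain_cons_split.mp (by simpa using h)
    obtain ⟨h₁E, h₁S⟩ := isChain_filter_torso hc heC h'.1
    obtain ⟨h₂E, h₂S⟩ := isChain_filter_torso heC hd h'.2
    simp only [List.filter_append, List.filter_cons, heC, decide_true, if_true,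
      List.append_assoc, List.cons_append]
    refine ⟨List.isChain_cons_split.mpr ⟨h₁E, h₂E⟩, fun hT => ?_⟩
    obtain ⟨hT₁, hT₂⟩ := List.isChain_cons_split.mp hT
    simpa using List.isChain_cons_split.mpr ⟨h₁S hT₁, h₂S hT₂⟩
termination_by l.length
decreasing_by all_goals subst_vars; simp only [List.length_append, List.length_cons]; omega

theorem hasSCW_torso_of_isChain [DecidablePred (· ∈ C)] {c : V} {m : List V} {W : Set V}
    (hc : c ∈ C) (hE : (c :: (m ++ [c])).IsChain E)
    (hS : ¬ (c :: (m ++ [c])).IsChain (fun a b => (a, b) ∉ S))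
    (hW : ∀ x ∈ c :: (m ++ [c]), x ∉ W) :
    HasSCW (torsoE E C) (torsoS E C S) W := by
  obtain ⟨hE', hS'⟩ := isChain_filter_torso (S := S) hc hc hE
  refine ⟨c, c :: (m.filter (· ∈ C) ++ [c]), hE', by simp, ?_, fun x hx => hW x ?_,
    List.mem_cons_self, List.exists_mem_zip_tail_mem_iff_not_isChain.mpr (mt hS' hS)⟩
  · rw [← List.cons_append, List.getLast?_concat]; rfl
  · simp only [List.mem_cons, List.mem_append, List.mem_filter] at hx ⊢
    tauto

end Torso

theorem stmt15_general (E : V → V → Prop) (S : Set (V × V))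
    (T : Set V) (k : ℕ)
    (hT : ¬ HasSCW E S T) (Z : Set V) (hZ : Disjoint Z T)
    (T₂ : Set V) (hT₂T : Disjoint T₂ T) (hT₂k : T₂.ncard ≤ k)
    (hsol : ¬ HasSCW (torsoE E Zᶜ) (torsoS E Zᶜ S) T₂) :
    ∃ T₁ : Set V, Disjoint T₁ T ∧ T₁.ncard ≤ k ∧ ¬ HasSCW E S T₁ := by
  refine ⟨T₂, hT₂T, hT₂k, ?_⟩
  rintro ⟨v, l, hE, hlen, hclosed, hT₂l, hv, hS⟩
  by_cases hlZ : ∀ x ∈ l, x ∈ Z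
  · exact hT ⟨v, l, hE, hlen, hclosed, fun x hx => Set.disjoint_left.mp hZ (hlZ x hx), hv, hS⟩
  push Not at hlZ
  obtain ⟨c, hcl, hcZ⟩ := hlZ
  obtain ⟨m, hR, hml⟩ := List.exists_rotation_of_head?_eq_getLast? hlen hclosed hcl
  rw [List.exists_mem_zip_tail_mem_iff_not_isChain, hR] at hS
  classical
  exact hsol (hasSCW_torso_of_isChain hcZ ((hR E).mp hE) hS fun x hx => hT₂l x (hml x hx))

/-- If the reduced instance `I/Z` of Disjoint Subset-DFVS Compression (obtained
by taking the torso on `V(G) ∖ Z`) has a solution, then the original instance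
`I = (G, S, T, k)` has a solution; equivalently, if `I` is a no-instance then
`I/Z` is a no-instance. -/
theorem stmt15 [Fintype V] (E : V → V → Prop) (S : Set (V × V))
    (hSE : ∀ p ∈ S, E p.1 p.2) (T : Set V) (k : ℕ)
    (hT : ¬ HasSCW E S T) (Z : Set V) (hZ : Disjoint Z T)
    (T₂ : Set V) (hT₂C : T₂ ⊆ Zᶜ) (hT₂T : Disjoint T₂ T) (hT₂k : T₂.ncard ≤ k)
    (hsol : ¬ HasSCW (torsoE E Zᶜ) (torsoS E Zᶜ S) T₂) :
    ∃ T₁ : Set V, Disjoint T₁ T ∧ T₁.ncard ≤ k ∧ ¬ HasSCW E S T₁ :=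
  stmt15_general E S T k hT Z hZ T₂ hT₂T hT₂k hsol
end
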